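/- Under the invertibility assumption of each I − 𝐂_k T_{k+1} (with T as in the Riccati-type recursion T_N = 𝐆, T_k = 𝐋_k T_{k+1}(I − 𝐂_k T_{k+1})⁻¹𝐀_k + 𝐇_k), the solution of the forward-backward difference equation X_{k+1} = 𝐀_k X_k + 𝐂_k Z_{k+1}, Z_k = 𝐇_k X_k + 𝐋_k Z_{k+1}, X_t = x, Z_N = 𝐆X_N is unique, and every solution satisfies Z_k = T_k X_k for all k. -/

import Mathlib

/-!
The Riccati matrices `T k` decouple the two-point boundary problem. Backward from `Z N = G X N`:
if `Z (k+1) = T (k+1) X (k+1)`, the forward equation reads `(1 - C k T (k+1)) X (k+1) = A k X k`,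
so `X (k+1) = (1 - C k T (k+1))⁻¹ A k X k`, and substituting this into the backward equation
gives `Z k = T k X k` by the Riccati recursion. Hence every solution obeys the closed forward
recursion `X (k+1) = (1 - C k T (k+1))⁻¹ A k X k` from `X t = x`, which determines `X`, and then
`Z = T X`.
-/

open Matrix

variable {m l K : Type*} [Fintype m] [DecidableEq m] [Fintype l] [CommRing K]

theorem Matrix.eq_inv_mulVec_of_feedback {A : Matrix m m K} {C : Matrix m l K}
    {T : Matrix l m K} (hM : IsUnit (1 - C * T)) {x y : m → K} {z : l → K}
    (hy : y = A *ᵥ x + C *ᵥ z) (hz : z = T *ᵥ y) :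
    y = (1 - C * T)⁻¹ *ᵥ (A *ᵥ x) := by
  have := hM.invertible
  refine (inv_mulVec_eq_vec ?_).symm
  rw [sub_mulVec, one_mulVec, ← mulVec_mulVec, ← hz, eq_sub_iff_add_eq, ← hy]

section FBDE

variable (A : ℕ → Matrix m m K) (C : ℕ → Matrix m l K) (H : ℕ → Matrix l m K)
  (L : ℕ → Matrix l l K) (G : Matrix l m K) (t N : ℕ)

def IsRiccatiSolution (T : ℕ → Matrix l m K) : Prop :=
  T N = G ∧ ∀ k, t ≤ k → k < N →
    IsUnit (1 - C k * T (k + 1)) ∧ T k = L k * T (k + 1) * (1 - C k * T (k + 1))⁻¹ * A k + H k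

def IsFBDESolution (X : ℕ → m → K) (Z : ℕ → l → K) : Prop :=
  Z N = G *ᵥ X N ∧ ∀ k, t ≤ k → k < N →
    X (k + 1) = A k *ᵥ X k + C k *ᵥ Z (k + 1) ∧ Z k = H k *ᵥ X k + L k *ᵥ Z (k + 1)

variable {A C H L G t N} {T : ℕ → Matrix l m K} {X X' : ℕ → m → K} {Z Z' : ℕ → l → K}

theorem IsFBDESolution.eq_riccati_mulVec (hR : IsRiccatiSolution A C H L G t N T)
    (hS : IsFBDESolution A C H L G t N X Z) {k : ℕ} (htk : t ≤ k) (hkN : k ≤ N) :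
    Z k = T k *ᵥ X k := by
  induction hkN using Nat.decreasingInduction with
  | self => rw [hS.1, hR.1]
  | of_succ k hkN ih =>
    obtain ⟨hinv, hTk⟩ := hR.2 k htk hkN
    obtain ⟨hX, hZ⟩ := hS.2 k htk hkN
    have hZ₁ : Z (k + 1) = T (k + 1) *ᵥ X (k + 1) := ih (htk.trans k.le_succ)
    rw [hZ, hZ₁, eq_inv_mulVec_of_feedback hinv hX hZ₁, hTk, add_mulVec, add_comm]
    simp only [mulVec_mulVec, Matrix.mul_assoc]

theorem IsFBDESolution.state_succ (hR : IsRiccatiSolution A C H L G t N T)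
    (hS : IsFBDESolution A C H L G t N X Z) {k : ℕ} (htk : t ≤ k) (hkN : k < N) :
    X (k + 1) = (1 - C k * T (k + 1))⁻¹ *ᵥ (A k *ᵥ X k) :=
  eq_inv_mulVec_of_feedback (hR.2 k htk hkN).1 (hS.2 k htk hkN).1
    (hS.eq_riccati_mulVec hR (htk.trans k.le_succ) hkN)

theorem IsFBDESolution.state_eq (hR : IsRiccatiSolution A C H L G t N T)
    (hS : IsFBDESolution A C H L G t N X Z) (hS' : IsFBDESolution A C H L G t N X' Z')
    (ht : X' t = X t) {k : ℕ} (htk : t ≤ k) (hkN : k ≤ N) : X' k = X k := by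
  induction k, htk using Nat.le_induction with
  | base => exact ht
  | succ k htk ih =>
    rw [hS'.state_succ hR htk hkN, hS.state_succ hR htk hkN, ih (Nat.le_of_succ_le hkN)]

end FBDE

/-- Under invertibility of each `I − C_kT_{k+1}`, the solution of the
forward-backward difference equation is unique and satisfies `Z_k = T_kX_k`. -/
theorem FBDE_unique_solution {n p t N : ℕ}
    (AA : ℕ → Matrix (Fin n) (Fin n) ℝ) (CC : ℕ → Matrix (Fin n) (Fin p) ℝ)
    (HH : ℕ → Matrix (Fin p) (Fin n) ℝ) (LL : ℕ → Matrix (Fin p) (Fin p) ℝ)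
    (GG : Matrix (Fin p) (Fin n) ℝ) (x : Fin n → ℝ)
    (T : ℕ → Matrix (Fin p) (Fin n) ℝ)
    (hTN : T N = GG)
    (hinv : ∀ k, t ≤ k → k < N → IsUnit (1 - CC k * T (k+1)))
    (hT : ∀ k, t ≤ k → k < N →
      T k = LL k * T (k+1) * (1 - CC k * T (k+1))⁻¹ * AA k + HH k)
    (X X' : ℕ → Fin n → ℝ) (Z Z' : ℕ → Fin p → ℝ)
    (hXt : X t = x) (hZN : Z N = GG *ᵥ X N)
    (hsol : ∀ k, t ≤ k → k < N →
      X (k+1) = AA k *ᵥ X k + CC k *ᵥ Z (k+1) ∧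
      Z k = HH k *ᵥ X k + LL k *ᵥ Z (k+1))
    (hXt' : X' t = x) (hZN' : Z' N = GG *ᵥ X' N)
    (hsol' : ∀ k, t ≤ k → k < N →
      X' (k+1) = AA k *ᵥ X' k + CC k *ᵥ Z' (k+1) ∧
      Z' k = HH k *ᵥ X' k + LL k *ᵥ Z' (k+1)) :
    ∀ k, t ≤ k → k ≤ N →
      Z k = T k *ᵥ X k ∧ X' k = X k ∧ Z' k = Z k := by
  intro k htk hkN
  have hR : IsRiccatiSolution AA CC HH LL GG t N T :=
    ⟨hTN, fun k htk hkN => ⟨hinv k htk hkN, hT k htk hkN⟩⟩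
  have hS : IsFBDESolution AA CC HH LL GG t N X Z := ⟨hZN, hsol⟩
  have hS' : IsFBDESolution AA CC HH LL GG t N X' Z' := ⟨hZN', hsol'⟩
  have hZ := hS.eq_riccati_mulVec hR htk hkN
  have hX := hS.state_eq hR hS' (hXt'.trans hXt.symm) htk hkN
  exact ⟨hZ, hX, by rw [hS'.eq_riccati_mulVec hR htk hkN, hZ, hX]⟩
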